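/- arXiv:1601.00080 — 4 statements merged into one kernel-verified Lean document; each statement's English description precedes it below -/
import Mathlib

section
/- Let n > k ≥ l ≥ 1 be integers and a_{n-1},…,a_l nonnegative reals with a_l > 0. Suppose N is an m×m matrix with strictly positive entries satisfying N^n + a_{n-1}N^{n-1} + … + a_{k+1}N^{k+1} = a_k N^k + … + a_l N^l. Suppose X is an m×m matrix with nonnegative entries such that the block matrix M = [[N, X],[0, N]] satisfies the same polynomial identity M^n + a_{n-1}M^{n-1} + … + a_{k+1}M^{k+1} = a_k M^k + … + a_l M^l. Then X = 0. -/
/-!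
Write `τ i = tr (N ^ i * X)`, a nonnegative number. Multiplying the identity for `N` by `X` and
taking traces gives `τ n + ∑_{i > k} a i τ i = ∑_{i ≤ k} a i τ i`. The upper-right block of `M ^ i`
is `∑_{j < i} N ^ j X N ^ (i - 1 - j)`, and its trace against `N` is `i τ i`; so the identity for
`M` gives the same relation with every term weighted by its exponent. The weights are `≤ k` on
the right and `≥ k` on the left, whence `n τ n ≤ k τ n` and `τ n = 0`. As `N ^ n` is entrywise
positive and `X ≥ 0`, this forces `X = 0`.
-/

open Finset

namespace Matrix

variable {l m n o α : Type*}

theorem toBlocks₁₂_add [Add α] (M M' : Matrix (n ⊕ o) (l ⊕ m) α) :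
    (M + M').toBlocks₁₂ = M.toBlocks₁₂ + M'.toBlocks₁₂ := rfl

theorem toBlocks₁₂_smul {β : Type*} [SMul β α] (b : β) (M : Matrix (n ⊕ o) (l ⊕ m) α) :
    (b • M).toBlocks₁₂ = b • M.toBlocks₁₂ := rfl

theorem toBlocks₁₂_sum [AddCommMonoid α] {κ : Type*} (s : Finset κ)
    (M : κ → Matrix (n ⊕ o) (l ⊕ m) α) :
    (∑ i ∈ s, M i).toBlocks₁₂ = ∑ i ∈ s, (M i).toBlocks₁₂ := by
  ext
  simp [toBlocks₁₂, sum_apply]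

section CommRing

variable {ι R : Type*} [Fintype ι] [DecidableEq ι] [CommRing R]

theorem fromBlocks_zero₂₁_self_pow (A X : Matrix ι ι R) (i : ℕ) :
    fromBlocks A X 0 A ^ i =
      fromBlocks (A ^ i) (∑ j ∈ range i, A ^ j * X * A ^ (i - 1 - j)) 0 (A ^ i) := by
  induction i with
  | zero => simp
  | succ i ih =>
    rw [pow_succ, ih, fromBlocks_multiply]
    simp only [Matrix.mul_zero, Matrix.zero_mul, add_zero, zero_add, ← pow_succ]
    congr 1
    rw [sum_range_succ, Nat.add_sub_cancel, Nat.sub_self, pow_zero, Matrix.mul_one, add_comm,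
      Matrix.sum_mul]
    refine congrArg (· + _) (sum_congr rfl fun j hj => ?_)
    rw [Matrix.mul_assoc, ← pow_succ, show i - 1 - j + 1 = i - j by grind]

theorem trace_mul_toBlocks₁₂_fromBlocks_pow (A X : Matrix ι ι R) (i : ℕ) :
    trace (A * (fromBlocks A X 0 A ^ i).toBlocks₁₂) = i * trace (A ^ i * X) := by
  rw [fromBlocks_zero₂₁_self_pow, toBlocks_fromBlocks₁₂, Matrix.mul_sum, trace_sum]
  calc ∑ j ∈ range i, trace (A * (A ^ j * X * A ^ (i - 1 - j)))
      = ∑ j ∈ range i, trace (A ^ i * X) := sum_congr rfl fun j hj => by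
        rw [← Matrix.mul_assoc, trace_mul_comm, ← Matrix.mul_assoc, ← Matrix.mul_assoc, ← pow_succ,
          ← pow_add, show i - 1 - j + 1 + j = i by grind]
    _ = i * trace (A ^ i * X) := by simp

variable {s t : Finset ℕ} {n : ℕ} {a : ℕ → R}

theorem trace_pow_mul_eq_of_sum_eq {A : Matrix ι ι R} (X : Matrix ι ι R)
    (h : A ^ n + ∑ i ∈ t, a i • A ^ i = ∑ i ∈ s, a i • A ^ i) :
    trace (A ^ n * X) + ∑ i ∈ t, a i * trace (A ^ i * X) =
      ∑ i ∈ s, a i * trace (A ^ i * X) := by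
  have h' := congrArg (fun B => trace (B * X)) h
  simpa only [Matrix.add_mul, Matrix.sum_mul, Matrix.smul_mul, trace_add, trace_sum, trace_smul,
    smul_eq_mul] using h'

theorem trace_pow_mul_eq_of_fromBlocks_sum_eq {A X : Matrix ι ι R}
    (h : fromBlocks A X 0 A ^ n + ∑ i ∈ t, a i • fromBlocks A X 0 A ^ i =
      ∑ i ∈ s, a i • fromBlocks A X 0 A ^ i) :
    n * trace (A ^ n * X) + ∑ i ∈ t, i * (a i * trace (A ^ i * X)) =
      ∑ i ∈ s, i * (a i * trace (A ^ i * X)) := by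
  have h' := congrArg (fun B => trace (A * B.toBlocks₁₂)) h
  simpa only [toBlocks₁₂_add, toBlocks₁₂_sum, toBlocks₁₂_smul, Matrix.mul_add, Matrix.mul_sum,
    Matrix.mul_smul, trace_add, trace_sum, trace_smul, smul_eq_mul,
    trace_mul_toBlocks₁₂_fromBlocks_pow, mul_left_comm (a _)] using h'

end CommRing

section Positive

variable {ι R : Type*} [Fintype ι] [CommRing R] [LinearOrder R] [IsStrictOrderedRing R]
  {A X : Matrix ι ι R}

theorem pow_apply_pos [DecidableEq ι] (hA : ∀ i j, 0 < A i j) {s : ℕ} (hs : s ≠ 0) (i j : ι) :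
    0 < (A ^ s) i j := by
  obtain ⟨t, rfl⟩ := Nat.exists_eq_succ_of_ne_zero hs
  clear hs
  induction t generalizing j with
  | zero => simpa using hA i j
  | succ t ih =>
    rw [pow_succ, mul_apply]
    exact sum_pos (fun r _ => mul_pos (ih r) (hA r j)) ⟨i, mem_univ i⟩

theorem trace_mul_nonneg (hA : ∀ i j, 0 ≤ A i j) (hX : ∀ i j, 0 ≤ X i j) :
    0 ≤ trace (A * X) :=
  sum_nonneg fun i _ => sum_nonneg fun j _ => mul_nonneg (hA i j) (hX j i)

theorem eq_zero_of_trace_mul_eq_zero (hA : ∀ i j, 0 < A i j) (hX : ∀ i j, 0 ≤ X i j)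
    (h : trace (A * X) = 0) : X = 0 := by
  have hterm := fun i j => mul_nonneg (hA i j).le (hX j i)
  simp only [trace, Matrix.diag, mul_apply] at h
  rw [sum_eq_zero_iff_of_nonneg fun i _ => sum_nonneg fun j _ => hterm i j] at h
  ext j i
  have hij :=
    (sum_eq_zero_iff_of_nonneg fun j _ => hterm i j).mp (h i (mem_univ i)) j (mem_univ j)
  exact le_antisymm (not_lt.mp fun hx => (mul_pos (hA i j) hx).ne' hij) (hX j i)

end Positive

end Matrix

theorem eq_zero_of_sum_eq_of_weighted_sum_eq {R : Type*} [CommRing R] [LinearOrder R]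
    [IsStrictOrderedRing R] {s t : Finset ℕ} {k n : ℕ} (hkn : k < n) (hs : ∀ i ∈ s, i ≤ k)
    (ht : ∀ i ∈ t, k ≤ i) {x : R} {c : ℕ → R} (hx : 0 ≤ x) (hc : ∀ i, 0 ≤ c i)
    (h₀ : x + ∑ i ∈ t, c i = ∑ i ∈ s, c i)
    (h₁ : n * x + ∑ i ∈ t, i * c i = ∑ i ∈ s, i * c i) : x = 0 := by
  have hlow : ∑ i ∈ s, i * c i ≤ k * ∑ i ∈ s, c i := by
    rw [mul_sum]
    exact sum_le_sum fun i hi => mul_le_mul_of_nonneg_right (by exact_mod_cast hs i hi) (hc i)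
  have hhigh : k * ∑ i ∈ t, c i ≤ ∑ i ∈ t, i * c i := by
    rw [mul_sum]
    exact sum_le_sum fun i hi => mul_le_mul_of_nonneg_right (by exact_mod_cast ht i hi) (hc i)
  have hkn' : (k : R) < n := by exact_mod_cast hkn
  nlinarith

theorem stmt_2_general {m : ℕ} (n k l : ℕ) (hkn : k < n)
    (a : ℕ → ℝ) (ha : ∀ i, 0 ≤ a i)
    (N : Matrix (Fin m) (Fin m) ℝ) (hN : ∀ i j, 0 < N i j)
    (X : Matrix (Fin m) (Fin m) ℝ) (hX : ∀ i j, 0 ≤ X i j)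
    (hNeq : N ^ n + ∑ i ∈ Finset.Icc (k + 1) (n - 1), a i • N ^ i =
      ∑ i ∈ Finset.Icc l k, a i • N ^ i)
    (hMeq :
      (Matrix.fromBlocks N X 0 N : Matrix (Fin m ⊕ Fin m) (Fin m ⊕ Fin m) ℝ) ^ n +
          ∑ i ∈ Finset.Icc (k + 1) (n - 1),
            a i • (Matrix.fromBlocks N X 0 N : Matrix (Fin m ⊕ Fin m) (Fin m ⊕ Fin m) ℝ) ^ i =
        ∑ i ∈ Finset.Icc l k,
          a i • (Matrix.fromBlocks N X 0 N : Matrix (Fin m ⊕ Fin m) (Fin m ⊕ Fin m) ℝ) ^ i) :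
    X = 0 := by
  have htrace (i : ℕ) : 0 ≤ Matrix.trace (N ^ i * X) :=
    Matrix.trace_mul_nonneg (Matrix.pow_apply_nonneg (fun p q => (hN p q).le) i) hX
  have hn : Matrix.trace (N ^ n * X) = 0 :=
    eq_zero_of_sum_eq_of_weighted_sum_eq hkn (fun i hi => (mem_Icc.mp hi).2)
      (fun i hi => by grind) (htrace n) (fun i => mul_nonneg (ha i) (htrace i))
      (Matrix.trace_pow_mul_eq_of_sum_eq X hNeq)
      (Matrix.trace_pow_mul_eq_of_fromBlocks_sum_eq hMeq)
  exact Matrix.eq_zero_of_trace_mul_eq_zero (Matrix.pow_apply_pos hN (by omega)) hX hn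

theorem stmt_2 {m : ℕ} (n k l : ℕ) (hkn : k < n) (hlk : l ≤ k) (hl : 1 ≤ l)
    (a : ℕ → ℝ) (ha : ∀ i, 0 ≤ a i) (hal : 0 < a l)
    (N : Matrix (Fin m) (Fin m) ℝ) (hN : ∀ i j, 0 < N i j)
    (X : Matrix (Fin m) (Fin m) ℝ) (hX : ∀ i j, 0 ≤ X i j)
    (hNeq : N ^ n + ∑ i ∈ Finset.Icc (k + 1) (n - 1), a i • N ^ i =
      ∑ i ∈ Finset.Icc l k, a i • N ^ i)
    (hMeq :
      (Matrix.fromBlocks N X 0 N : Matrix (Fin m ⊕ Fin m) (Fin m ⊕ Fin m) ℝ) ^ n +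
          ∑ i ∈ Finset.Icc (k + 1) (n - 1),
            a i • (Matrix.fromBlocks N X 0 N : Matrix (Fin m ⊕ Fin m) (Fin m ⊕ Fin m) ℝ) ^ i =
        ∑ i ∈ Finset.Icc l k,
          a i • (Matrix.fromBlocks N X 0 N : Matrix (Fin m ⊕ Fin m) (Fin m ⊕ Fin m) ℝ) ^ i) :
    X = 0 :=
  stmt_2_general n k l hkn a ha N hN X hX hNeq hMeq
end

section
/- Let C = ℂ[x,y,z]/(x+y+z, xy+xz+yz, xyz) and let a, b ∈ ℂ satisfy a² − ab + b² = 0 with a ≠ 0 and b ≠ 0. Then the quotient M = C/(ax+by) is a 3-dimensional ℂ-vector space, with basis given by the images of 1, x, x². -/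
open MvPolynomial

/-- The ideal of `ℂ[x,y,z]` generated by the elementary symmetric polynomials. -/
noncomputable abbrev coinvIdeal : Ideal (MvPolynomial (Fin 3) ℂ) :=
  Ideal.span {X 0 + X 1 + X 2, X 0 * X 1 + X 0 * X 2 + X 1 * X 2, X 0 * X 1 * X 2}

/-- The coinvariant algebra `C = ℂ[x,y,z]/(x+y+z, xy+xz+yz, xyz)` of `S₃`. -/
abbrev Coinv : Type := MvPolynomial (Fin 3) ℂ ⧸ coinvIdeal

noncomputable abbrev cmk : MvPolynomial (Fin 3) ℂ →+* Coinv := Ideal.Quotient.mk coinvIdeal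


/-- The quotient `M_{a,b} = C/(ax+by)`. -/
abbrev Mquot (a b : ℂ) : Type :=
  Coinv ⧸ Ideal.span {a • cmk (X 0) + b • cmk (X 1)}

noncomputable abbrev mmk (a b : ℂ) : Coinv →+* Mquot a b :=
  Ideal.Quotient.mk (Ideal.span {a • cmk (X 0) + b • cmk (X 1)})

/-! Put `c = -a/b`; the hypothesis says `c² + c + 1 = 0`. In `M` the relation `ax + by = 0` gives
`y = c x`, then `x + y + z = 0` gives `z = c² x`, so the substitution `(x, y, z) ↦ (t, c t, c² t)`
identifies `M` with `ℂ[t]/(t³)`: it kills `x + y + z` and `xy + xz + yz` because `1 + c + c² = 0`,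
and turns `xyz` into `c³ t³ = t³`. The basis `1, x, x²` is the power basis `1, t, t²`. -/

open scoped Polynomial

theorem PowerBasis.exists_basis_fin_eq_pow {R S : Type*} [CommRing R] [Ring S] [Algebra R S]
    (pb : PowerBasis R S) {n : ℕ} (hn : pb.dim = n) :
    ∃ B : Module.Basis (Fin n) R S, ∀ i, B i = pb.gen ^ (i : ℕ) := by
  subst hn
  exact ⟨pb.basis, pb.basis_eq_pow⟩

theorem coinvIdeal_le_ker_aeval_iff {A : Type*} [CommRing A] [Algebra ℂ A] {c : ℂ}
    (hc : c ^ 2 + c + 1 = 0) (t : A) :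
    coinvIdeal ≤ RingHom.ker (aeval fun i : Fin 3 => c ^ (i : ℕ) • t) ↔ t ^ 3 = 0 := by
  have hω : algebraMap ℂ A c ^ 2 + algebraMap ℂ A c + 1 = 0 := by
    simpa using congrArg (algebraMap ℂ A) hc
  have hω3 : algebraMap ℂ A c ^ 3 = 1 := by linear_combination (algebraMap ℂ A c - 1) * hω
  rw [Ideal.span_le]
  constructor
  · intro h
    have h3 := h (a := X 0 * X 1 * X 2) (by simp)
    simp only [SetLike.mem_coe, RingHom.mem_ker, map_mul, aeval_X, Fin.val_zero, Fin.val_one,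
      Fin.val_two, pow_zero, pow_one, Algebra.smul_def, map_pow] at h3
    linear_combination h3 - t ^ 3 * hω3
  · rintro ht p (rfl | rfl | rfl) <;> simp [Algebra.smul_def]
    · linear_combination t * hω
    · linear_combination algebraMap ℂ A c * t ^ 2 * hω
    · linear_combination algebraMap ℂ A c ^ 3 * ht

namespace Mquot

variable {a b : ℂ}

noncomputable def mkₐ (a b : ℂ) : MvPolynomial (Fin 3) ℂ →ₐ[ℂ] Mquot a b :=
  (Ideal.Quotient.mkₐ ℂ _).comp (Ideal.Quotient.mkₐ ℂ coinvIdeal)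

theorem mkₐ_surjective : Function.Surjective (mkₐ a b) :=
  (Ideal.Quotient.mkₐ_surjective ℂ _).comp (Ideal.Quotient.mkₐ_surjective ℂ _)

theorem mkₐ_eq_zero_of_mem_coinvIdeal {p : MvPolynomial (Fin 3) ℂ} (hp : p ∈ coinvIdeal) :
    mkₐ a b p = 0 := by
  simp [mkₐ, Ideal.Quotient.eq_zero_iff_mem.mpr hp]

theorem mkₐ_linear_form : a • mkₐ a b (X 0) + b • mkₐ a b (X 1) = 0 :=
  Ideal.Quotient.eq_zero_iff_mem.mpr (Ideal.subset_span rfl)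

section Lift

variable {A : Type*} [CommRing A] [Algebra ℂ A] (f : MvPolynomial (Fin 3) ℂ →ₐ[ℂ] A)
  (hf : coinvIdeal ≤ RingHom.ker f)

noncomputable def lift (hlin : a • f (X 0) + b • f (X 1) = 0) : Mquot a b →ₐ[ℂ] A :=
  Ideal.Quotient.liftₐ _ (Ideal.Quotient.liftₐ coinvIdeal f fun _ hp => hf hp) fun q hq => by
    obtain ⟨r, rfl⟩ := Ideal.mem_span_singleton'.mp hq
    rw [map_mul, map_add, map_smul, map_smul]
    exact mul_eq_zero_of_right _ hlin

@[simp]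
theorem lift_mkₐ (hlin : a • f (X 0) + b • f (X 1) = 0) (p : MvPolynomial (Fin 3) ℂ) :
    lift f hf hlin (mkₐ a b p) = f p :=
  rfl

end Lift

section CubeRoot

variable {c : ℂ}

theorem mkₐ_X_eq_smul (hb : b ≠ 0) (hc : c ^ 2 + c + 1 = 0) (hab : a + b * c = 0) (i : Fin 3) :
    mkₐ a b (X i) = c ^ (i : ℕ) • mkₐ a b (X 0) := by
  have hy : mkₐ a b (X 1) = c • mkₐ a b (X 0) := by
    have hinv : b⁻¹ * b = 1 := inv_mul_cancel₀ hb
    linear_combination (norm := module) b⁻¹ • mkₐ_linear_form - b⁻¹ • hab • mkₐ a b (X 0) -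
      hinv • (mkₐ a b (X 1) - c • mkₐ a b (X 0))
  have hsum : mkₐ a b (X 0 + X 1 + X 2) = 0 :=
    mkₐ_eq_zero_of_mem_coinvIdeal (Ideal.subset_span (by simp))
  rw [map_add, map_add] at hsum
  fin_cases i
  · simp
  · simpa using hy
  · show mkₐ a b (X 2) = c ^ 2 • mkₐ a b (X 0)
    linear_combination (norm := module) hsum - hy - hc • mkₐ a b (X 0)

theorem mkₐ_eq_aeval (hb : b ≠ 0) (hc : c ^ 2 + c + 1 = 0) (hab : a + b * c = 0) :
    mkₐ a b = aeval fun i : Fin 3 => c ^ (i : ℕ) • mkₐ a b (X 0) := by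
  ext i
  simp [mkₐ_X_eq_smul hb hc hab i]

theorem mkₐ_X_zero_pow_three (hb : b ≠ 0) (hc : c ^ 2 + c + 1 = 0) (hab : a + b * c = 0) :
    mkₐ a b (X 0) ^ 3 = 0 := by
  refine (coinvIdeal_le_ker_aeval_iff hc (mkₐ a b (X 0))).mp ?_
  rw [← mkₐ_eq_aeval hb hc hab]
  exact fun p hp => mkₐ_eq_zero_of_mem_coinvIdeal hp

variable (a b c)

noncomputable def toAdjoinRoot (hc : c ^ 2 + c + 1 = 0) (hab : a + b * c = 0) :
    Mquot a b →ₐ[ℂ] AdjoinRoot (Polynomial.X ^ 3 : ℂ[X]) :=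
  lift (aeval fun i => c ^ (i : ℕ) • AdjoinRoot.root _)
    ((coinvIdeal_le_ker_aeval_iff hc _).mpr (AdjoinRoot.mk_self (f := Polynomial.X ^ 3)))
    (by
      simp only [aeval_X, Fin.val_zero, Fin.val_one, pow_zero, pow_one, one_smul]
      rw [smul_smul, ← add_smul, hab, zero_smul])

noncomputable def ofAdjoinRoot (hb : b ≠ 0) (hc : c ^ 2 + c + 1 = 0) (hab : a + b * c = 0) :
    AdjoinRoot (Polynomial.X ^ 3 : ℂ[X]) →ₐ[ℂ] Mquot a b :=
  AdjoinRoot.liftAlgHom _ (Algebra.ofId ℂ _) (mkₐ a b (X 0))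
    (by rw [Polynomial.eval₂_X_pow]; exact mkₐ_X_zero_pow_three hb hc hab)

noncomputable def equivAdjoinRoot (hb : b ≠ 0) (hc : c ^ 2 + c + 1 = 0) (hab : a + b * c = 0) :
    Mquot a b ≃ₐ[ℂ] AdjoinRoot (Polynomial.X ^ 3 : ℂ[X]) :=
  AlgEquiv.ofAlgHom (toAdjoinRoot a b c hc hab) (ofAdjoinRoot a b c hb hc hab)
    (AdjoinRoot.algHom_ext (by simp [ofAdjoinRoot, toAdjoinRoot]))
    ((AlgHom.cancel_right mkₐ_surjective).mp (MvPolynomial.algHom_ext fun i => by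
      simp [ofAdjoinRoot, toAdjoinRoot, mkₐ_X_eq_smul hb hc hab i]))

noncomputable def powerBasis (hb : b ≠ 0) (hc : c ^ 2 + c + 1 = 0) (hab : a + b * c = 0) :
    PowerBasis ℂ (Mquot a b) :=
  PowerBasis.map (S' := Mquot a b) (AdjoinRoot.powerBasis' (Polynomial.monic_X_pow 3))
    (equivAdjoinRoot a b c hb hc hab).symm

theorem powerBasis_dim (hb : b ≠ 0) (hc : c ^ 2 + c + 1 = 0) (hab : a + b * c = 0) :
    (powerBasis a b c hb hc hab).dim = 3 := by
  simp [powerBasis]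

theorem powerBasis_gen (hb : b ≠ 0) (hc : c ^ 2 + c + 1 = 0) (hab : a + b * c = 0) :
    (powerBasis a b c hb hc hab).gen = mkₐ a b (X 0) := by
  simp [powerBasis, equivAdjoinRoot, ofAdjoinRoot]

end CubeRoot

end Mquot

theorem stmt_12_general (a b : ℂ) (h : a ^ 2 - a * b + b ^ 2 = 0) (hb : b ≠ 0) :
    Module.finrank ℂ (Mquot a b) = 3 ∧
    LinearIndependent ℂ
      ![(1 : Mquot a b), mmk a b (cmk (X 0)), mmk a b (cmk (X 0 ^ 2))] ∧
    Submodule.span ℂ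
        (Set.range ![(1 : Mquot a b), mmk a b (cmk (X 0)), mmk a b (cmk (X 0 ^ 2))]) =
      ⊤ := by
  have hab : a + b * (-a / b) = 0 := by field_simp; ring
  have hc : (-a / b) ^ 2 + -a / b + 1 = 0 := by field_simp; linear_combination h
  obtain ⟨B, hB⟩ := (Mquot.powerBasis a b _ hb hc hab).exists_basis_fin_eq_pow
    (Mquot.powerBasis_dim a b _ hb hc hab)
  have hB' : ⇑B = ![(1 : Mquot a b), mmk a b (cmk (X 0)), mmk a b (cmk (X 0 ^ 2))] := by
    ext i
    fin_cases i <;> simp [hB, Mquot.powerBasis_gen, Mquot.mkₐ]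
  rw [← hB']
  exact ⟨(Module.finrank_eq_card_basis B).trans (Fintype.card_fin 3), B.linearIndependent,
    B.span_eq⟩

/-- If `a² − ab + b² = 0` with `a,b ≠ 0`, then `C/(ax+by)` is a 3-dimensional `ℂ`-vector
space with basis the images of `1, x, x²`. -/
theorem stmt_12 (a b : ℂ) (h : a ^ 2 - a * b + b ^ 2 = 0) (ha : a ≠ 0) (hb : b ≠ 0) :
    Module.finrank ℂ (Mquot a b) = 3 ∧
    LinearIndependent ℂ
      ![(1 : Mquot a b), mmk a b (cmk (X 0)), mmk a b (cmk (X 0 ^ 2))] ∧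
    Submodule.span ℂ
        (Set.range ![(1 : Mquot a b), mmk a b (cmk (X 0)), mmk a b (cmk (X 0 ^ 2))]) =
      ⊤ :=
  stmt_12_general a b h hb
end

section
/- Let C = ℂ[x,y,z]/(x+y+z, xy+xz+yz, xyz) and let a, b ∈ ℂ satisfy a² − ab + b² = 0 with a ≠ 0, b ≠ 0. Then the quotient algebra C/(ax+by) is isomorphic, as a ℂ-algebra, to ℂ[q]/(q³), with the image of x corresponding to q. -/
open MvPolynomial

/-!
Put `t = -a/b`; the relation `a² - ab + b² = 0` says `1 + t + t² = 0`. In `C/(ax+by)` one has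
`y = t x`, and `x + y + z = 0` gives `z = -(1 + t) x = t² x`, while `x³ = 0` already in `C`
(as `x³ = x² e₁ - x e₂ + e₃`). Conversely `(q, t q, t² q)` is a common zero of `e₁, e₂, e₃` in
`ℂ[q]/(q³)` at which `ax + by` vanishes, so `x ↦ q` and `q ↦ x` are mutually inverse algebra maps.
-/

lemma one_add_neg_div_add_sq_eq_zero {K : Type*} [Field K] {a b : K}
    (h : a ^ 2 - a * b + b ^ 2 = 0) (hb : b ≠ 0) : 1 + -a / b + (-a / b) ^ 2 = 0 := by
  field_simp
  linear_combination h

def IsCoinvPoint {S : Type*} [CommRing S] (v : Fin 3 → S) : Prop :=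
  v 0 + v 1 + v 2 = 0 ∧ v 0 * v 1 + v 0 * v 2 + v 1 * v 2 = 0 ∧ v 0 * v 1 * v 2 = 0

lemma isCoinvPoint_of_cube_root {R S : Type*} [CommRing R] [CommRing S] [Algebra R S] {ω : R}
    (hω : 1 + ω + ω ^ 2 = 0) {q : S} (hq : q ^ 3 = 0) :
    IsCoinvPoint ![q, ω • q, ω ^ 2 • q] := by
  have hω' : 1 + algebraMap R S ω + algebraMap R S ω ^ 2 = 0 := by
    simpa using congrArg (algebraMap R S) hω
  refine ⟨?_, ?_, ?_⟩ <;> simp only [Matrix.cons_val, Algebra.smul_def, map_pow]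
  · linear_combination q * hω'
  · linear_combination algebraMap R S ω * q ^ 2 * hω'
  · linear_combination algebraMap R S ω ^ 3 * hq

lemma AdjoinRoot.root_X_pow_pow_eq_zero (R : Type*) [CommRing R] (n : ℕ) :
    AdjoinRoot.root (Polynomial.X ^ n : Polynomial R) ^ n = 0 := by
  rw [AdjoinRoot.root, ← map_pow]
  exact AdjoinRoot.mk_self

section Lifts

variable {S : Type*} [CommRing S] [Algebra ℂ S]

noncomputable def coinvLift (v : Fin 3 → S) (hv : IsCoinvPoint v) : Coinv →ₐ[ℂ] S :=
  Ideal.Quotient.liftₐ coinvIdeal (aeval v) <| by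
    obtain ⟨h₁, h₂, h₃⟩ := hv
    suffices coinvIdeal ≤ RingHom.ker (aeval v) from fun p hp ↦ this hp
    rw [Ideal.span_le]
    rintro p (rfl | rfl | rfl) <;> simp [h₁, h₂, h₃]

@[simp]
lemma coinvLift_cmk (v : Fin 3 → S) (hv : IsCoinvPoint v) (p : MvPolynomial (Fin 3) ℂ) :
    coinvLift v hv (cmk p) = aeval v p :=
  rfl

noncomputable def mquotLift (a b : ℂ) (f : Coinv →ₐ[ℂ] S)
    (hf : a • f (cmk (X 0)) + b • f (cmk (X 1)) = 0) : Mquot a b →ₐ[ℂ] S :=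
  Ideal.Quotient.liftₐ _ f <| by
    suffices Ideal.span {a • cmk (X 0) + b • cmk (X 1)} ≤ RingHom.ker f from fun p hp ↦ this hp
    rw [Ideal.span_singleton_le_iff_mem, RingHom.mem_ker]
    simpa using hf

@[simp]
lemma mquotLift_mmk (a b : ℂ) (f : Coinv →ₐ[ℂ] S)
    (hf : a • f (cmk (X 0)) + b • f (cmk (X 1)) = 0) (p : Coinv) :
    mquotLift a b f hf (mmk a b p) = f p :=
  rfl

end Lifts

lemma cmk_X_zero_pow_three : cmk (X 0) ^ 3 = 0 := by
  rw [← map_pow, Ideal.Quotient.eq_zero_iff_mem, show (X 0 : MvPolynomial (Fin 3) ℂ) ^ 3 = X 0 ^ 2 * (X 0 + X 1 + X 2)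
      - X 0 * (X 0 * X 1 + X 0 * X 2 + X 1 * X 2) + X 0 * X 1 * X 2 by ring]
  refine add_mem (sub_mem (Ideal.mul_mem_left _ _ ?_) (Ideal.mul_mem_left _ _ ?_)) ?_ <;>
    exact Ideal.subset_span (by simp)

lemma cmk_X_two : cmk (X 2) = -cmk (X 0) - cmk (X 1) := by
  have : cmk (X 0 + X 1 + X 2) = 0 :=
    Ideal.Quotient.eq_zero_iff_mem.mpr (Ideal.subset_span (by simp))
  rw [map_add, map_add] at this
  linear_combination this

section Mquot

variable {a b : ℂ}

lemma mmk_linear_relation : a • mmk a b (cmk (X 0)) + b • mmk a b (cmk (X 1)) = 0 := by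
  have : Ideal.Quotient.mkₐ ℂ _ (a • cmk (X 0) + b • cmk (X 1)) = 0 :=
    Ideal.Quotient.eq_zero_iff_mem.mpr (Ideal.mem_span_singleton_self _)
  rwa [map_add, map_smul, map_smul] at this

lemma mmk_X_one (hb : b ≠ 0) : mmk a b (cmk (X 1)) = (-a / b) • mmk a b (cmk (X 0)) := by
  apply smul_right_injective _ hb
  simp only [smul_smul, mul_div_cancel₀ _ hb]
  linear_combination (norm := module) (mmk_linear_relation (a := a) (b := b))

lemma mmk_X_two (h : a ^ 2 - a * b + b ^ 2 = 0) (hb : b ≠ 0) :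
    mmk a b (cmk (X 2)) = (-a / b) ^ 2 • mmk a b (cmk (X 0)) := by
  rw [cmk_X_two, map_sub, map_neg, mmk_X_one hb]
  linear_combination (norm := module)
    -(one_add_neg_div_add_sq_eq_zero h hb) • mmk a b (cmk (X 0))

noncomputable def mquotToAdjoinRoot (h : a ^ 2 - a * b + b ^ 2 = 0) (hb : b ≠ 0) :
    Mquot a b →ₐ[ℂ] AdjoinRoot (Polynomial.X ^ 3 : Polynomial ℂ) :=
  let q := AdjoinRoot.root (Polynomial.X ^ 3 : Polynomial ℂ)
  mquotLift a b (coinvLift ![q, (-a / b) • q, (-a / b) ^ 2 • q]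
      (isCoinvPoint_of_cube_root (one_add_neg_div_add_sq_eq_zero h hb)
        (AdjoinRoot.root_X_pow_pow_eq_zero ℂ 3))) <| by
    simp only [coinvLift_cmk, aeval_X, Matrix.cons_val]
    rw [smul_smul, mul_div_cancel₀ _ hb, neg_smul, add_neg_cancel]

@[simp]
lemma mquotToAdjoinRoot_mmk_cmk (h : a ^ 2 - a * b + b ^ 2 = 0) (hb : b ≠ 0) (i : Fin 3) :
    mquotToAdjoinRoot h hb (mmk a b (cmk (X i))) =
      (-a / b) ^ (i : ℕ) • AdjoinRoot.root (Polynomial.X ^ 3 : Polynomial ℂ) := by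
  fin_cases i <;> simp [mquotToAdjoinRoot]

variable (a b) in
noncomputable def adjoinRootToMquot :
    AdjoinRoot (Polynomial.X ^ 3 : Polynomial ℂ) →ₐ[ℂ] Mquot a b :=
  AdjoinRoot.liftAlgHom _ (Algebra.ofId ℂ _) (mmk a b (cmk (X 0))) <| by
    rw [Polynomial.eval₂_X_pow, ← map_pow, cmk_X_zero_pow_three, map_zero]

@[simp]
lemma adjoinRootToMquot_root :
    adjoinRootToMquot a b (AdjoinRoot.root _) = mmk a b (cmk (X 0)) :=
  AdjoinRoot.liftAlgHom_root _ _ _ _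

noncomputable def mquotEquivAdjoinRoot (h : a ^ 2 - a * b + b ^ 2 = 0) (hb : b ≠ 0) :
    Mquot a b ≃ₐ[ℂ] AdjoinRoot (Polynomial.X ^ 3 : Polynomial ℂ) :=
  AlgEquiv.ofAlgHom (mquotToAdjoinRoot h hb) (adjoinRootToMquot a b)
    (AdjoinRoot.algHom_ext <| by simp) <| by
    refine Ideal.Quotient.algHom_ext _ <| Ideal.Quotient.algHom_ext _ <|
      MvPolynomial.algHom_ext fun i ↦ ?_
    fin_cases i
    · simp
    · simp [mmk_X_one hb]
    · simp [mmk_X_two h hb]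

end Mquot

/- `AdjoinRoot (X ^ 3)` is by definition `ℂ[X] ⧸ (X ^ 3)`, and its `root` is the class of `X`. -/
theorem stmt_13_general (a b : ℂ) (h : a ^ 2 - a * b + b ^ 2 = 0) (hb : b ≠ 0) :
    ∃ φ : Mquot a b ≃ₐ[ℂ] (Polynomial ℂ ⧸ Ideal.span {(Polynomial.X : Polynomial ℂ) ^ 3}),
      φ (mmk a b (cmk (X 0))) =
        Ideal.Quotient.mk (Ideal.span {(Polynomial.X : Polynomial ℂ) ^ 3}) Polynomial.X :=
  ⟨mquotEquivAdjoinRoot h hb, (mquotToAdjoinRoot_mmk_cmk h hb 0).trans (one_smul ℂ _)⟩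

/-- If `a² − ab + b² = 0` with `a,b ≠ 0`, then `C/(ax+by) ≅ ℂ[q]/(q³)` as `ℂ`-algebras,
with the image of `x` corresponding to `q`. -/
theorem stmt_13 (a b : ℂ) (h : a ^ 2 - a * b + b ^ 2 = 0) (ha : a ≠ 0) (hb : b ≠ 0) :
    ∃ φ : Mquot a b ≃ₐ[ℂ] (Polynomial ℂ ⧸ Ideal.span {(Polynomial.X : Polynomial ℂ) ^ 3}),
      φ (mmk a b (cmk (X 0))) =
        Ideal.Quotient.mk (Ideal.span {(Polynomial.X : Polynomial ℂ) ^ 3}) Polynomial.X :=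
  stmt_13_general a b h hb
end

section
/- Let C = ℂ[x,y,z]/(x+y+z, xy+xz+yz, xyz) and let a, b ∈ ℂ satisfy a² − ab + b² = 0 with a ≠ 0, b ≠ 0. Then the image of xy in C/(ax+by) is nonzero, and the image of x² in C/(ax+by) is nonzero. -/
open MvPolynomial

/-!
Since `a² - ab + b² = 0`, the number `ω = -a/b` is a primitive cube root of unity and
`a + bω = 0`. Hence `(x, y, z) ↦ (t, ωt, ω²t)` kills the elementary symmetric polynomials
modulo `t³` as well as `ax + by`, so it induces an algebra map `C/(ax+by) → ℂ[t]/(t³)`.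
It sends `xy` to `ωt²` and `x²` to `t²`, which are nonzero.
-/

theorem Ideal.Quotient.mk_ne_zero_of_le_ker {R S : Type*} [CommRing R] [Semiring S]
    {I : Ideal R} (f : R →+* S) (hI : I ≤ RingHom.ker f) {x : R} (hx : f x ≠ 0) :
    Ideal.Quotient.mk I x ≠ 0 :=
  fun h => hx (hI (Ideal.Quotient.eq_zero_iff_mem.mp h))

section TruncatedPolynomial

open scoped Polynomial

variable (R : Type*) [CommRing R]

noncomputable abbrev truncX : R[X] ⧸ Ideal.span {(Polynomial.X ^ 3 : R[X])} :=
  Ideal.Quotient.mk _ Polynomial.X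

theorem truncX_pow_three : truncX R ^ 3 = 0 := by
  rw [← map_pow, Ideal.Quotient.eq_zero_iff_mem]
  exact Ideal.mem_span_singleton_self _

variable {R}

theorem smul_truncX_sq_ne_zero {c : R} (hc : c ≠ 0) : c • truncX R ^ 2 ≠ 0 := by
  rw [← map_pow, ← Ideal.Quotient.mkₐ_eq_mk R, ← map_smul, Ideal.Quotient.mkₐ_eq_mk, Ne,
    Ideal.Quotient.eq_zero_iff_mem, Ideal.mem_span_singleton, Polynomial.X_pow_dvd_iff]
  intro hdvd
  exact hc (by simpa using hdvd 2 (by norm_num))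

end TruncatedPolynomial

theorem span_esymm_le_ker_aeval {R A : Type*} [CommRing R] [CommRing A] [Algebra R A]
    {ω : R} {t : A} (hω : 1 + ω + ω ^ 2 = 0) (ht : t ^ 3 = 0) :
    Ideal.span {X 0 + X 1 + X 2, X 0 * X 1 + X 0 * X 2 + X 1 * X 2, X 0 * X 1 * X 2} ≤
      RingHom.ker (aeval ![t, ω • t, ω ^ 2 • t] : MvPolynomial (Fin 3) R →ₐ[R] A) := by
  have hω' : 1 + algebraMap R A ω + algebraMap R A ω ^ 2 = 0 := by
    simpa using congrArg (algebraMap R A) hω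
  rw [Ideal.span_le]
  rintro p (rfl | rfl | rfl) <;>
    simp only [SetLike.mem_coe, RingHom.mem_ker, map_add, map_mul, aeval_X, Algebra.smul_def,
      map_pow, Matrix.cons_val_zero, Matrix.cons_val_one, Matrix.cons_val]
  · linear_combination t * hω'
  · linear_combination algebraMap R A ω * t ^ 2 * hω'
  · linear_combination (algebraMap R A ω) ^ 3 * ht

section CoinvEval

variable {ω : ℂ} (hω : 1 + ω + ω ^ 2 = 0)

noncomputable def coinvEval :
    Coinv →ₐ[ℂ] Polynomial ℂ ⧸ Ideal.span {(Polynomial.X ^ 3 : Polynomial ℂ)} :=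
  Ideal.Quotient.liftₐ coinvIdeal _ (span_esymm_le_ker_aeval hω (truncX_pow_three ℂ))

theorem coinvEval_mk (p : MvPolynomial (Fin 3) ℂ) :
    coinvEval hω (cmk p) = aeval ![truncX ℂ, ω • truncX ℂ, ω ^ 2 • truncX ℂ] p :=
  Ideal.Quotient.liftₐ_apply ..

theorem span_le_ker_coinvEval {a b : ℂ} (hab : a + b * ω = 0) :
    Ideal.span {a • cmk (X 0) + b • cmk (X 1)} ≤ RingHom.ker (coinvEval hω) := by
  rw [Ideal.span_singleton_le_iff_mem, RingHom.mem_ker, map_add, map_smul, map_smul,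
    coinvEval_mk, coinvEval_mk]
  simp only [aeval_X, Matrix.cons_val_zero, Matrix.cons_val_one]
  rw [smul_smul, ← add_smul, hab, zero_smul]

end CoinvEval

theorem stmt_14_general (a b : ℂ) (h : a ^ 2 - a * b + b ^ 2 = 0) (hb : b ≠ 0) :
    mmk a b (cmk (X 0 * X 1)) ≠ 0 ∧ mmk a b (cmk (X 0 ^ 2)) ≠ 0 := by
  set ω := -a / b
  have hab : a + b * ω = 0 := by rw [mul_div_cancel₀ _ hb, add_neg_cancel]
  have hω : 1 + ω + ω ^ 2 = 0 := by
    refine mul_left_cancel₀ (pow_ne_zero 2 hb) ?_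
    linear_combination h + (b + b * ω - a) * hab
  have hω0 : ω ≠ 0 := fun h0 => by simp [h0] at hω
  have hker := span_le_ker_coinvEval hω hab
  constructor
  · refine Ideal.Quotient.mk_ne_zero_of_le_ker _ hker ?_
    simpa [coinvEval_mk, mul_smul_comm, ← sq] using smul_truncX_sq_ne_zero hω0
  · refine Ideal.Quotient.mk_ne_zero_of_le_ker _ hker ?_
    simpa [coinvEval_mk] using smul_truncX_sq_ne_zero (one_ne_zero (α := ℂ))

/-- If `a² − ab + b² = 0` with `a,b ≠ 0`, then the images of `xy` and of `x²`
in `C/(ax+by)` are nonzero. -/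
theorem stmt_14 (a b : ℂ) (h : a ^ 2 - a * b + b ^ 2 = 0) (ha : a ≠ 0) (hb : b ≠ 0) :
    mmk a b (cmk (X 0 * X 1)) ≠ 0 ∧ mmk a b (cmk (X 0 ^ 2)) ≠ 0 :=
  stmt_14_general a b h hb
end
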